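/- arXiv:math/0505301 — 2 statements merged into one kernel-verified Lean document; each statement's English description precedes it below -/
import Mathlib

section
/- The hyperplane H = { x ∈ ℝ^m : ⟨x, u⟩ = 1 }, where u_i = √i − √(i−1), is a supporting hyperplane of the polytope C_m = conv(B_m): every point of C_m satisfies ⟨x, u⟩ ≤ 1, and the points v_1, …, v_m of C_m lie on H. -/
open scoped RealInnerProductSpace BigOperators
noncomputable section

def A (m : ℕ) : Set (EuclideanSpace ℝ (Fin m)) :=
  {v | (∀ i, v i = -1 ∨ v i = 0 ∨ v i = 1) ∧ v ≠ 0}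

def B (m : ℕ) : Set (EuclideanSpace ℝ (Fin m)) :=
  (fun v => ‖v‖⁻¹ • v) '' A m

def vk (m : ℕ) (k : Fin m) : EuclideanSpace ℝ (Fin m) :=
  WithLp.toLp 2 (fun i => if i ≤ k then (Real.sqrt ((k : ℕ) + 1))⁻¹ else 0)

def u (m : ℕ) : EuclideanSpace ℝ (Fin m) :=
  WithLp.toLp 2 (fun i => Real.sqrt ((i : ℕ) + 1) - Real.sqrt (i : ℕ))

/-! Since `u` is decreasing with telescoping partial sums `u₁ + ⋯ + uₛ = √s`, a sign vector `v`
with `s` nonzero entries satisfies `⟪v, u⟫ ≤ ∑_{i ∈ supp v} uᵢ ≤ u₁ + ⋯ + uₛ = √s = ‖v‖`, so every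
point of `B m`, hence of its convex hull, lies below the hyperplane. The normalized indicator of
the first `k` coordinates is `v_k`, for which both inequalities are equalities. -/

open Real Finset

lemma sqrt_succ_sub_sqrt_eq_inv (x : ℝ) (hx : 0 ≤ x) : √(x + 1) - √x = (√(x + 1) + √x)⁻¹ := by
  refine eq_inv_of_mul_eq_one_left ?_
  rw [mul_comm, ← sq_sub_sq, sq_sqrt (by linarith), sq_sqrt hx]
  ring

lemma antitone_sqrt_succ_sub_sqrt : Antitone fun n : ℕ => √(n + 1) - √n := by
  intro a b hab
  simp only [sqrt_succ_sub_sqrt_eq_inv _ (Nat.cast_nonneg _)]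
  have hab' : (a : ℝ) ≤ b := by exact_mod_cast hab
  gcongr

lemma sum_range_sqrt_succ_sub_sqrt (n : ℕ) : ∑ i ∈ range n, (√(i + 1) - √i) = √n := by
  simpa using sum_range_sub (fun i : ℕ => √i) n

lemma Antitone.sum_le_sum_range_card {M : Type*} [AddCommMonoid M] [PartialOrder M]
    [IsOrderedAddMonoid M] {f : ℕ → M} (hf : Antitone f) (s : Finset ℕ) :
    ∑ i ∈ s, f i ≤ ∑ i ∈ range #s, f i := by
  induction s using Finset.induction_on_max with
  | empty => simp
  | insert a s ha ih =>
    have ha' : a ∉ s := fun h => (ha a h).false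
    have hcard : #s ≤ a := by simpa using card_le_card fun x hx => mem_range.2 (ha x hx)
    rw [sum_insert ha', card_insert_of_notMem ha', sum_range_succ, add_comm]
    exact add_le_add ih (hf hcard)

section SignVectors

variable {ι : Type*} [Fintype ι]

lemma EuclideanSpace.real_inner_eq_sum (x y : EuclideanSpace ℝ ι) : ⟪x, y⟫ = ∑ i, x i * y i := by
  simp [PiLp.inner_apply, mul_comm]

lemma EuclideanSpace.inner_le_sum_support {v w : EuclideanSpace ℝ ι} (hv : ∀ i, v i ≤ 1)
    (hw : ∀ i, 0 ≤ w i) : ⟪v, w⟫ ≤ ∑ i with v i ≠ 0, w i := by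
  rw [EuclideanSpace.real_inner_eq_sum, sum_filter]
  refine sum_le_sum fun i _ => ?_
  split_ifs with h
  · simpa using mul_le_mul_of_nonneg_right (hv i) (hw i)
  · simp [not_not.1 h]

lemma EuclideanSpace.norm_eq_sqrt_card_support {v : EuclideanSpace ℝ ι}
    (hv : ∀ i, v i = -1 ∨ v i = 0 ∨ v i = 1) : ‖v‖ = √(#{i | v i ≠ 0} : ℝ) := by
  rw [EuclideanSpace.norm_eq, card_eq_sum_ones, Nat.cast_sum, sum_filter]
  congr 1
  refine sum_congr rfl fun i _ => ?_
  rcases hv i with h | h | h <;> simp [h]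

end SignVectors

section Polytope

variable {m : ℕ}

lemma u_nonneg (i : Fin m) : 0 ≤ u m i :=
  sub_nonneg.2 (sqrt_le_sqrt (by linarith))

lemma sum_u_le_sqrt_card (s : Finset (Fin m)) : ∑ i ∈ s, u m i ≤ √(#s : ℝ) := by
  have h := antitone_sqrt_succ_sub_sqrt.sum_le_sum_range_card (s.map Fin.valEmbedding)
  rwa [sum_map, card_map, sum_range_sqrt_succ_sub_sqrt] at h

lemma sum_u_Iic (k : Fin m) : ∑ i ∈ Iic k, u m i = √((k : ℕ) + 1) := by
  have h := sum_range_sqrt_succ_sub_sqrt ((k : ℕ) + 1)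
  rwa [Nat.range_succ_eq_Iic, ← Fin.map_valEmbedding_Iic, sum_map, Nat.cast_succ] at h

lemma inner_u_le_norm_of_mem_A {v : EuclideanSpace ℝ (Fin m)} (hv : v ∈ A m) :
    ⟪v, u m⟫ ≤ ‖v‖ := by
  have hv_le_one (i : Fin m) : v i ≤ 1 := by rcases hv.1 i with h | h | h <;> simp [h]
  calc ⟪v, u m⟫ ≤ ∑ i with v i ≠ 0, u m i :=
        EuclideanSpace.inner_le_sum_support hv_le_one u_nonneg
    _ ≤ √(#{i | v i ≠ 0} : ℝ) := sum_u_le_sqrt_card _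
    _ = ‖v‖ := (EuclideanSpace.norm_eq_sqrt_card_support hv.1).symm

lemma inner_u_le_one_of_mem_B {b : EuclideanSpace ℝ (Fin m)} (hb : b ∈ B m) : ⟪b, u m⟫ ≤ 1 := by
  obtain ⟨v, hv, rfl⟩ := hb
  rw [real_inner_smul_left, inv_mul_le_one₀ (norm_pos_iff.2 hv.2)]
  exact inner_u_le_norm_of_mem_A hv

lemma inner_u_le_one_of_mem_convexHull {x : EuclideanSpace ℝ (Fin m)}
    (hx : x ∈ convexHull ℝ (B m)) : ⟪x, u m⟫ ≤ 1 :=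
  convexHull_min (fun _ => inner_u_le_one_of_mem_B)
    (convex_halfSpace_le (f := fun y => ⟪y, u m⟫)
      ⟨fun a b => inner_add_left a b _, fun r a => real_inner_smul_left a _ r⟩ (1 : ℝ))
    hx

def iicIndicator (m : ℕ) (k : Fin m) : EuclideanSpace ℝ (Fin m) :=
  WithLp.toLp 2 fun i => if i ≤ k then 1 else 0

lemma iicIndicator_mem_A (k : Fin m) : iicIndicator m k ∈ A m := by
  refine ⟨fun i => ?_, fun h => ?_⟩
  · by_cases hi : i ≤ k <;> simp [iicIndicator, hi]
  · simpa [iicIndicator] using congrArg (· k) h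

lemma norm_iicIndicator (k : Fin m) : ‖iicIndicator m k‖ = √((k : ℕ) + 1) := by
  rw [EuclideanSpace.norm_eq_sqrt_card_support (iicIndicator_mem_A k).1]
  simp [iicIndicator, filter_ge_eq_Iic]

lemma inner_iicIndicator_u (k : Fin m) : ⟪iicIndicator m k, u m⟫ = √((k : ℕ) + 1) := by
  rw [EuclideanSpace.real_inner_eq_sum, ← sum_u_Iic, ← filter_ge_eq_Iic, sum_filter]
  simp [iicIndicator]

lemma vk_eq_smul_iicIndicator (k : Fin m) : vk m k = ‖iicIndicator m k‖⁻¹ • iicIndicator m k := by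
  ext i
  rw [norm_iicIndicator]
  by_cases hi : i ≤ k <;> simp [vk, iicIndicator, hi]

lemma vk_mem_B (k : Fin m) : vk m k ∈ B m :=
  ⟨_, iicIndicator_mem_A k, (vk_eq_smul_iicIndicator k).symm⟩

lemma inner_vk_u (k : Fin m) : ⟪vk m k, u m⟫ = 1 := by
  rw [vk_eq_smul_iicIndicator, real_inner_smul_left, inner_iicIndicator_u, norm_iicIndicator]
  exact inv_mul_cancel₀ (by positivity)

end Polytope

theorem stmt9_general (m : ℕ) :
    (∀ x ∈ convexHull ℝ (B m), ⟪x, u m⟫ ≤ 1) ∧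
    (∀ k : Fin m, vk m k ∈ convexHull ℝ (B m) ∧ ⟪vk m k, u m⟫ = 1) :=
  ⟨fun _ => inner_u_le_one_of_mem_convexHull,
    fun k => ⟨subset_convexHull ℝ _ (vk_mem_B k), inner_vk_u k⟩⟩

theorem stmt9 (m : ℕ) (hm : 2 ≤ m) :
    (∀ x ∈ convexHull ℝ (B m), ⟪x, u m⟫ ≤ 1) ∧
    (∀ k : Fin m, vk m k ∈ convexHull ℝ (B m) ∧ ⟪vk m k, u m⟫ = 1) :=
  stmt9_general m
end
end

section
/- With s_m the inradius of C_m = conv(B_m), one has s_m·√(log m) → 2 as m → ∞; i.e., s_m is asymptotically 2/√(log m). -/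
open scoped BigOperators
noncomputable section

def s (m : ℕ) : ℝ :=
  sSup {r : ℝ | 0 ≤ r ∧ Metric.closedBall (0 : EuclideanSpace ℝ (Fin m)) r ⊆ convexHull ℝ (B m)}

/-! The inradius is exactly `‖b‖⁻¹` for `b = (√(k+1) - √k)_{k<m}`. The support function of
`C_m` at `w` is `max_k (sum of the k largest |w_i|) / √k`. Partial sums of `b` are `√k` and `b` is
decreasing, so `⟪b, ·⟫ ≤ 1` on `B_m` and `s_m ≤ ‖b‖⁻¹`. Conversely, if `t` is the largest of these
ratios, the partial sums of the sorted `|w_i|` are dominated by those of `t • b`; Abel summation and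
Cauchy–Schwarz give `‖w‖² ≤ t ‖w‖ ‖b‖`, so every support value is at least `‖w‖ / ‖b‖`. Finally
`log (m+1) ≤ 4‖b‖² ≤ 5 + log m` by comparison with the harmonic numbers. -/

open Finset Real Metric Filter Topology
open scoped InnerProductSpace

theorem Antitone.sum_range_mul_le_of_sum_range_le {f g h : ℕ → ℝ} {n : ℕ} (hf : Antitone f)
    (hf0 : 0 ≤ f (n - 1)) (hgh : ∀ k ≤ n, ∑ i ∈ range k, g i ≤ ∑ i ∈ range k, h i) :
    ∑ i ∈ range n, f i * g i ≤ ∑ i ∈ range n, f i * h i := by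
  simp only [← smul_eq_mul (a := f _)]
  rw [sum_range_by_parts f g, sum_range_by_parts f h]
  simp only [smul_eq_mul]
  refine sub_le_sub (mul_le_mul_of_nonneg_left (hgh n le_rfl) hf0) (sum_le_sum fun i hi => ?_)
  exact mul_le_mul_of_nonpos_left (hgh (i + 1) (by have := mem_range.mp hi; omega))
    (sub_nonpos.mpr (hf (Nat.le_succ i)))

theorem Antitone.sum_le_sum_range_card_s12 {g : ℕ → ℝ} (hg : Antitone g) (T : Finset ℕ) :
    ∑ i ∈ T, g i ≤ ∑ i ∈ range #T, g i := by
  induction T using Finset.induction_on_max with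
  | empty => simp
  | insert a T hlt ih =>
    have haT : a ∉ T := fun ha => lt_irrefl a (hlt a ha)
    have hcard : #T ≤ a := by
      simpa using card_le_card (fun x hx => mem_range.mpr (hlt x hx) : T ⊆ range a)
    rw [sum_insert haT, card_insert_of_notMem haT, sum_range_succ, add_comm]
    exact add_le_add ih (hg hcard)

def sqrtGap (k : ℕ) : ℝ := √(k + 1) - √k

theorem sqrtGap_eq_inv (k : ℕ) : sqrtGap k = (√(k + 1) + √k)⁻¹ := by
  have h1 : √((k:ℝ) + 1) ^ 2 = k + 1 := sq_sqrt (by positivity)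
  have h0 : √(k:ℝ) ^ 2 = k := sq_sqrt (by positivity)
  refine eq_inv_of_mul_eq_one_left ?_
  rw [sqrtGap]
  nlinarith

theorem sqrtGap_nonneg (k : ℕ) : 0 ≤ sqrtGap k := by
  rw [sqrtGap_eq_inv]; positivity

theorem sqrtGap_antitone : Antitone sqrtGap := by
  intro j k hjk
  have hjk' : (j : ℝ) ≤ k := by exact_mod_cast hjk
  rw [sqrtGap_eq_inv, sqrtGap_eq_inv]
  gcongr

theorem sum_range_sqrtGap (n : ℕ) : ∑ i ∈ range n, sqrtGap i = √n := by
  simpa [sqrtGap] using sum_range_sub (fun i : ℕ => √(i : ℝ)) n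

theorem inv_le_four_mul_sqrtGap_sq (k : ℕ) : ((k : ℝ) + 1)⁻¹ ≤ 4 * sqrtGap k ^ 2 := by
  have h1 : √((k:ℝ) + 1) ^ 2 = k + 1 := sq_sqrt (by positivity)
  have hle : √(k:ℝ) ≤ √((k:ℝ) + 1) := sqrt_le_sqrt (by linarith)
  have hsq : (√((k:ℝ) + 1) + √k) ^ 2 ≤ 4 * (k + 1) := by nlinarith [sqrt_nonneg (k:ℝ)]
  calc ((k : ℝ) + 1)⁻¹ = 4 / (4 * (k + 1)) := by field_simp
    _ ≤ 4 / (√((k:ℝ) + 1) + √k) ^ 2 := by gcongr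
    _ = 4 * sqrtGap k ^ 2 := by rw [sqrtGap_eq_inv, inv_pow, div_eq_mul_inv]

theorem four_mul_sqrtGap_succ_sq_le (k : ℕ) : 4 * sqrtGap (k + 1) ^ 2 ≤ ((k : ℝ) + 1)⁻¹ := by
  have h1 : √((k:ℝ) + 1) ^ 2 = k + 1 := sq_sqrt (by positivity)
  have hle : √((k:ℝ) + 1) ≤ √((k:ℝ) + 1 + 1) := sqrt_le_sqrt (by linarith)
  have hsq : 4 * ((k:ℝ) + 1) ≤ (√((k:ℝ) + 1 + 1) + √((k:ℝ) + 1)) ^ 2 := by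
    nlinarith [sqrt_nonneg ((k:ℝ) + 1)]
  calc 4 * sqrtGap (k + 1) ^ 2 = 4 / (√((k:ℝ) + 1 + 1) + √((k:ℝ) + 1)) ^ 2 := by
        rw [sqrtGap_eq_inv, inv_pow, div_eq_mul_inv]; push_cast; ring
    _ ≤ 4 / (4 * ((k : ℝ) + 1)) := by gcongr
    _ = ((k : ℝ) + 1)⁻¹ := by field_simp

theorem log_le_four_mul_sum_sqrtGap_sq (m : ℕ) :
    log (m + 1) ≤ 4 * ∑ k ∈ range m, sqrtGap k ^ 2 := by
  calc log (m + 1) ≤ harmonic m := by exact_mod_cast log_add_one_le_harmonic m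
    _ = ∑ k ∈ range m, ((k : ℝ) + 1)⁻¹ := by simp [harmonic]
    _ ≤ 4 * ∑ k ∈ range m, sqrtGap k ^ 2 := by
      rw [mul_sum]; exact sum_le_sum fun k _ => inv_le_four_mul_sqrtGap_sq k

theorem four_mul_sum_sqrtGap_sq_le (m : ℕ) :
    4 * ∑ k ∈ range m, sqrtGap k ^ 2 ≤ 5 + log m := by
  rcases m with _ | n
  · simp
  have hlog : log n ≤ log (n + 1 : ℕ) := by
    rcases n with _ | n
    · simp
    · exact log_le_log (by positivity) (by push_cast; linarith)
  calc 4 * ∑ k ∈ range (n + 1), sqrtGap k ^ 2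
      = 4 + ∑ k ∈ range n, 4 * sqrtGap (k + 1) ^ 2 := by
        rw [sum_range_succ', mul_add, mul_sum]; simp [sqrtGap, add_comm]
    _ ≤ 4 + ∑ k ∈ range n, ((k : ℝ) + 1)⁻¹ := by
        gcongr with k; exact four_mul_sqrtGap_succ_sq_le k
    _ = 4 + harmonic n := by simp [harmonic]
    _ ≤ 5 + log (n + 1 : ℕ) := by linarith [harmonic_le_one_add_log n]

theorem Antitone.exists_sqrt_sum_sq_le {a : ℕ → ℝ} (ha : Antitone a) (ha0 : ∀ i, 0 ≤ a i)
    {n : ℕ} (hn : 0 < n) :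
    ∃ k ∈ Icc 1 n, √(∑ i ∈ range n, a i ^ 2)
      ≤ √(∑ i ∈ range n, sqrtGap i ^ 2) * ((∑ i ∈ range k, a i) / √k) := by
  obtain ⟨k, hk, hmax⟩ := exists_max_image (Icc 1 n) (fun k => (∑ i ∈ range k, a i) / √k)
    (nonempty_Icc.mpr hn)
  refine ⟨k, hk, ?_⟩
  set t := (∑ i ∈ range k, a i) / √k
  have ht : 0 ≤ t := div_nonneg (sum_nonneg fun i _ => ha0 i) (sqrt_nonneg _)
  have hmaj : ∀ j ≤ n, ∑ i ∈ range j, a i ≤ ∑ i ∈ range j, t * sqrtGap i := by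
    intro j hj
    rw [← mul_sum, sum_range_sqrtGap]
    rcases j.eq_zero_or_pos with rfl | hj0
    · simp
    · have hj' := hmax j (mem_Icc.mpr ⟨hj0, hj⟩)
      rwa [div_le_iff₀ (sqrt_pos.mpr (by exact_mod_cast hj0))] at hj'
  set A := ∑ i ∈ range n, a i ^ 2
  have hA : √A * √A ≤ √A * (√(∑ i ∈ range n, sqrtGap i ^ 2) * t) :=
    calc √A * √A = ∑ i ∈ range n, a i * a i := by rw [mul_self_sqrt (by positivity)]; simp [A, sq]
      _ ≤ ∑ i ∈ range n, a i * (t * sqrtGap i) :=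
        ha.sum_range_mul_le_of_sum_range_le (ha0 _) hmaj
      _ = t * ∑ i ∈ range n, a i * sqrtGap i := by
        rw [mul_sum]; exact sum_congr rfl fun i _ => by ring
      _ ≤ t * (√A * √(∑ i ∈ range n, sqrtGap i ^ 2)) := by
        gcongr; exact sum_mul_le_sqrt_mul_sqrt _ _ _
      _ = √A * (√(∑ i ∈ range n, sqrtGap i ^ 2) * t) := by ring
  rcases (sqrt_nonneg A).eq_or_lt with hA0 | hA0
  · rw [← hA0]; positivity
  · exact le_of_mul_le_mul_left hA hA0

section
variable {E : Type*} [NormedAddCommGroup E] [InnerProductSpace ℝ E]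

theorem closedBall_subset_of_forall_exists_inner_ge [CompleteSpace E] {C : Set E} {r : ℝ}
    (hC : Convex ℝ C) (hCc : IsClosed C) (h : ∀ w : E, ∃ p ∈ C, r * ‖w‖ ≤ ⟪w, p⟫_ℝ) :
    closedBall 0 r ⊆ C := by
  intro x hx
  by_contra hxC
  obtain ⟨f, u, hfC, hfx⟩ := geometric_hahn_banach_closed_point hC hCc hxC
  set w := (InnerProductSpace.toDual ℝ E).symm f
  have hw : ∀ y, ⟪w, y⟫_ℝ = f y := fun y => InnerProductSpace.toDual_symm_apply
  obtain ⟨p, hp, hwp⟩ := h w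
  have hfp := hfC p hp
  have hxr : ‖x‖ ≤ r := mem_closedBall_zero_iff.mp hx
  have hwx := real_inner_le_norm w x
  rw [hw] at hwp hwx
  nlinarith [norm_nonneg w]

theorem mul_norm_le_of_closedBall_subset_convexHull {S : Set E} {u : E} {r c : ℝ} (hr : 0 ≤ r)
    (hS : ∀ p ∈ S, ⟪u, p⟫_ℝ ≤ c) (h : closedBall 0 r ⊆ convexHull ℝ S) : r * ‖u‖ ≤ c := by
  have hhull : convexHull ℝ S ⊆ {x | ⟪u, x⟫_ℝ ≤ c} :=
    convexHull_min hS (convex_halfSpace_le (innerₛₗ ℝ u).isLinear c)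
  rcases eq_or_ne u 0 with rfl | hu
  · simpa using hhull (h (mem_closedBall_self hr))
  have hu' : 0 < ‖u‖ := norm_pos_iff.mpr hu
  have hx : (r / ‖u‖) • u ∈ closedBall (0 : E) r := by
    rw [mem_closedBall_zero_iff, norm_smul, norm_div, norm_norm, Real.norm_of_nonneg hr,
      div_mul_cancel₀ _ hu'.ne']
  have hux : ⟪u, (r / ‖u‖) • u⟫_ℝ ≤ c := hhull (h hx)
  rw [real_inner_smul_right, real_inner_self_eq_norm_sq] at hux
  calc r * ‖u‖ = r / ‖u‖ * ‖u‖ ^ 2 := by field_simp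
    _ ≤ c := hux
end

theorem A_finite (m : ℕ) : (A m).Finite := by
  refine ((Set.Finite.pi fun _ => Set.toFinite ({-1, 0, 1} : Set ℝ)).image
    (WithLp.toLp 2)).subset fun v hv => ⟨WithLp.ofLp v, fun i _ => ?_, rfl⟩
  rcases hv.1 i with h | h | h <;> simp [h]

theorem norm_sq_eq_card_of_mem_A {m : ℕ} {v : EuclideanSpace ℝ (Fin m)} (hv : v ∈ A m) :
    ‖v‖ ^ 2 = #{i | v i ≠ 0} := by
  rw [EuclideanSpace.real_norm_sq_eq, natCast_card_filter]
  refine sum_congr rfl fun i _ => ?_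
  rcases hv.1 i with h | h | h <;> simp [h]

theorem inner_le_sum_abs_of_mem_A {m : ℕ} (u : EuclideanSpace ℝ (Fin m))
    {v : EuclideanSpace ℝ (Fin m)} (hv : v ∈ A m) :
    ⟪u, v⟫_ℝ ≤ ∑ i with v i ≠ 0, |u i| := by
  rw [PiLp.inner_apply, sum_filter]
  refine sum_le_sum fun i _ => ?_
  rcases hv.1 i with h | h | h <;> simp [h, le_abs_self, neg_le_abs]

theorem exists_mem_B_inner_eq {m : ℕ} (w : EuclideanSpace ℝ (Fin m)) {T : Finset (Fin m)}
    (hT : T.Nonempty) : ∃ p ∈ B m, ⟪w, p⟫_ℝ = (∑ i ∈ T, |w i|) / √(#T : ℝ) := by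
  -- not `SignType.sign (w i)`, which would vanish where `w i = 0`
  set v : EuclideanSpace ℝ (Fin m) :=
    WithLp.toLp 2 fun i => if i ∈ T then (if 0 ≤ w i then 1 else -1) else 0
  have hv : v ∈ A m := by
    refine ⟨fun i => ?_, fun h0 => ?_⟩
    · by_cases hi : i ∈ T <;> by_cases hwi : 0 ≤ w i <;> simp [v, hi, hwi]
    · obtain ⟨i, hi⟩ := hT
      have := congrArg (· i) h0
      by_cases hwi : 0 ≤ w i <;> simp [v, hi, hwi] at this
  have hsupp : ({i | v i ≠ 0} : Finset (Fin m)) = T := by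
    ext i
    by_cases hi : i ∈ T <;> by_cases hwi : 0 ≤ w i <;> simp [v, hi, hwi]
  have hnorm : ‖v‖ = √(#T : ℝ) := by
    rw [← hsupp, ← norm_sq_eq_card_of_mem_A hv, sqrt_sq (norm_nonneg v)]
  have hinner : ⟪w, v⟫_ℝ = ∑ i ∈ T, |w i| := by
    rw [PiLp.inner_apply, ← sum_subset (subset_univ T) fun i _ hi => by simp [v, hi]]
    refine sum_congr rfl fun i hi => ?_
    by_cases hwi : 0 ≤ w i
    · simp [v, hi, hwi, abs_of_nonneg hwi]
    · simp [v, hi, hwi, abs_of_neg (not_le.mp hwi)]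
  refine ⟨‖v‖⁻¹ • v, ⟨v, hv, rfl⟩, ?_⟩
  rw [real_inner_smul_right, hinner, hnorm, inv_mul_eq_div]

theorem exists_antitone_abs_rearrangement {m : ℕ} (w : Fin m → ℝ) :
    ∃ a : ℕ → ℝ, Antitone a ∧ (∀ i, 0 ≤ a i) ∧ ∑ i ∈ range m, a i ^ 2 = ∑ i, w i ^ 2 ∧
      ∀ k ≤ m, ∃ T : Finset (Fin m), #T = k ∧ ∑ i ∈ T, |w i| = ∑ i ∈ range k, a i := by
  set σ := Tuple.sort (OrderDual.toDual ∘ fun i => |w i|)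
  have hσ : Antitone fun i => |w (σ i)| :=
    monotone_toDual_comp_iff.mp (Tuple.monotone_sort (OrderDual.toDual ∘ fun i => |w i|))
  set a : ℕ → ℝ := fun k => if h : k < m then |w (σ ⟨k, h⟩)| else 0
  have ha0 : ∀ i, 0 ≤ a i := fun i => by unfold a; split_ifs <;> simp
  refine ⟨a, fun j k hjk => ?_, ha0, ?_, fun k hkm => ?_⟩
  · by_cases hk : k < m
    · have hj := hjk.trans_lt hk
      simpa [a, hk, hj] using hσ (show (⟨j, hj⟩ : Fin m) ≤ ⟨k, hk⟩ from hjk)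
    · simpa [a, hk] using ha0 j
  · rw [← Fin.sum_univ_eq_sum_range (fun i => a i ^ 2), ← Equiv.sum_comp σ (fun i => w i ^ 2)]
    exact sum_congr rfl fun i _ => by simp [a]
  · refine ⟨univ.map ((Fin.castLEEmb hkm).trans σ.toEmbedding), by simp, ?_⟩
    rw [sum_map, ← Fin.sum_univ_eq_sum_range]
    exact sum_congr rfl fun i _ => by simp [a, i.isLt.trans_le hkm]; rfl

def sqrtGapVec (m : ℕ) : EuclideanSpace ℝ (Fin m) := WithLp.toLp 2 fun i => sqrtGap i

theorem norm_sqrtGapVec (m : ℕ) : ‖sqrtGapVec m‖ = √(∑ k ∈ range m, sqrtGap k ^ 2) := by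
  rw [← sqrt_sq (norm_nonneg _), EuclideanSpace.real_norm_sq_eq,
    ← Fin.sum_univ_eq_sum_range (fun k => sqrtGap k ^ 2)]
  rfl

theorem norm_sqrtGapVec_pos {m : ℕ} (hm : 0 < m) : 0 < ‖sqrtGapVec m‖ := by
  refine norm_pos_iff.mpr fun h => ?_
  have := congrArg (· ⟨0, hm⟩) h
  simp [sqrtGapVec, sqrtGap] at this

theorem inner_sqrtGapVec_le_one {m : ℕ} : ∀ p ∈ B m, ⟪sqrtGapVec m, p⟫_ℝ ≤ 1 := by
  rintro _ ⟨v, hv, rfl⟩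
  set T : Finset (Fin m) := {i | v i ≠ 0}
  have hnorm : ‖v‖ = √(#T : ℝ) := by
    rw [← norm_sq_eq_card_of_mem_A hv, sqrt_sq (norm_nonneg v)]
  have hsum : ∑ i ∈ T, |sqrtGapVec m i| ≤ √(#T : ℝ) := by
    calc ∑ i ∈ T, |sqrtGapVec m i| = ∑ k ∈ T.map Fin.valEmbedding, sqrtGap k := by
          simp [sqrtGapVec, abs_of_nonneg (sqrtGap_nonneg _)]
      _ ≤ ∑ k ∈ range #T, sqrtGap k := by
          simpa using sqrtGap_antitone.sum_le_sum_range_card_s12 (T.map Fin.valEmbedding)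
      _ = √(#T : ℝ) := sum_range_sqrtGap _
  rw [real_inner_smul_right, inv_mul_le_one₀ (norm_pos_iff.mpr hv.2), hnorm]
  exact (inner_le_sum_abs_of_mem_A _ hv).trans hsum

theorem exists_mem_B_norm_le_mul_inner {m : ℕ} (hm : 0 < m) (w : EuclideanSpace ℝ (Fin m)) :
    ∃ p ∈ B m, ‖w‖ ≤ ‖sqrtGapVec m‖ * ⟪w, p⟫_ℝ := by
  obtain ⟨a, ha, ha0, hsq, htop⟩ := exists_antitone_abs_rearrangement w
  obtain ⟨k, hk, hle⟩ := ha.exists_sqrt_sum_sq_le ha0 hm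
  obtain ⟨hk1, hkm⟩ := mem_Icc.mp hk
  obtain ⟨T, hcard, hT⟩ := htop k hkm
  obtain ⟨p, hp, hwp⟩ := exists_mem_B_inner_eq w (card_pos.mp (hcard ▸ hk1))
  refine ⟨p, hp, ?_⟩
  rwa [hwp, hT, hcard, norm_sqrtGapVec, ← sqrt_sq (norm_nonneg w),
    EuclideanSpace.real_norm_sq_eq, ← hsq]

theorem s_eq_inv_norm_sqrtGapVec {m : ℕ} (hm : 0 < m) : s m = ‖sqrtGapVec m‖⁻¹ := by
  have hu := norm_sqrtGapVec_pos hm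
  refine IsGreatest.csSup_eq ⟨⟨inv_nonneg.mpr hu.le, ?_⟩, fun r ⟨hr, hball⟩ => ?_⟩
  · refine closedBall_subset_of_forall_exists_inner_ge (convex_convexHull ℝ _)
      (((A_finite m).image _).isClosed_convexHull (𝕜 := ℝ)) fun w => ?_
    obtain ⟨p, hp, hwp⟩ := exists_mem_B_norm_le_mul_inner hm w
    refine ⟨p, subset_convexHull ℝ _ hp, ?_⟩
    rwa [inv_mul_le_iff₀ hu]
  · rw [← one_div, le_div_iff₀ hu]
    exact mul_norm_le_of_closedBall_subset_convexHull hr inner_sqrtGapVec_le_one hball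

theorem tendsto_four_mul_sum_sqrtGap_sq_div_log :
    Tendsto (fun m : ℕ => 4 * (∑ k ∈ range m, sqrtGap k ^ 2) / log m) atTop (𝓝 1) := by
  have hlog : Tendsto (fun m : ℕ => log m) atTop atTop :=
    tendsto_log_atTop.comp tendsto_natCast_atTop_atTop
  have hupper : Tendsto (fun m : ℕ => 1 + 5 / log m) atTop (𝓝 1) := by
    simpa using tendsto_const_nhds.add (tendsto_const_nhds.div_atTop hlog)
  refine tendsto_of_tendsto_of_tendsto_of_le_of_le' tendsto_const_nhds hupper ?_ ?_
  · filter_upwards [eventually_gt_atTop 0, hlog.eventually_gt_atTop 0] with m hm0 hm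
    rw [le_div_iff₀ hm, one_mul]
    calc log m ≤ log (m + 1) := log_le_log (by exact_mod_cast hm0) (by linarith)
      _ ≤ _ := log_le_four_mul_sum_sqrtGap_sq m
  · filter_upwards [hlog.eventually_gt_atTop 0] with m hm
    rw [div_le_iff₀ hm, add_mul, div_mul_cancel₀ _ hm.ne', one_mul, add_comm]
    exact four_mul_sum_sqrtGap_sq_le m

theorem stmt12 :
    Filter.Tendsto (fun m : ℕ => s m * Real.sqrt (Real.log m)) Filter.atTop (nhds 2) := by
  have hlim : Tendsto (fun m : ℕ => 2 * (√(4 * (∑ k ∈ range m, sqrtGap k ^ 2) / log m))⁻¹)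
      atTop (𝓝 2) := by
    simpa using (tendsto_four_mul_sum_sqrtGap_sq_div_log.sqrt.inv₀ (by simp)).const_mul 2
  refine hlim.congr' ?_
  filter_upwards [eventually_gt_atTop 0,
    (tendsto_log_atTop.comp tendsto_natCast_atTop_atTop).eventually_gt_atTop 0] with m hm hlog
  have hsqrt4 : √(4 : ℝ) = 2 := by rw [show (4 : ℝ) = 2 ^ 2 by norm_num, sqrt_sq zero_le_two]
  rw [s_eq_inv_norm_sqrtGapVec hm, norm_sqrtGapVec, sqrt_div (by positivity), sqrt_mul zero_le_four,
    hsqrt4]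
  field_simp
end
end
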